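/- arXiv:2511.06737 — 2 statements merged into one kernel-verified Lean document; each statement's English description precedes it below -/
import Mathlib

section
/- For all natural numbers n and m: if m > n or m ≢ n (mod 2), then a(n,m) = 0; and if m ≤ n and m ≡ n (mod 2), then a(n,m) = C(n, (n−m)/2) − C(n, (n−m)/2 − 1), where C(n,k) denotes the binomial coefficient and C(n,−1) is interpreted as 0 (equivalently, a(n,m) + C(n, (n−m)/2 − 1) = C(n, (n−m)/2)). -/
open Filter Real

/-- `aa n m` = number of length-`n` paths on `ℤ≥0` with steps `±1` starting at `0`
and ending at `m`. -/
def aa : ℕ → ℕ → ℕ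
  | 0, m => if m = 0 then 1 else 0
  | n+1, m => aa n (m+1) + (if m = 0 then 0 else aa n (m-1))

/-- `aSum n = Σ_{m=0}^n aa n m`. -/
def aSum (n : ℕ) : ℕ := ∑ m ∈ Finset.range (n+1), aa n m

/-- The modular variant `b(n,m)` depending on `ℓ`:
`b(n,m) = a(n,m)` if `m ≡ ℓ-1 (mod ℓ)`; otherwise `b(0,m) = δ_{m,0}`, and for `n ≥ 1`,
`b(n,m) = b(n-1,m-1) + b(n-1,m+1)` if `m % ℓ < ℓ-2` (negative-index terms are `0`),
and `b(n,m) = b(n-1,m-1)` if `m ≡ ℓ-2 (mod ℓ)`. -/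
def bb (ℓ : ℕ) : ℕ → ℕ → ℕ
  | 0, m => if m % ℓ = ℓ - 1 then aa 0 m else if m = 0 then 1 else 0
  | n+1, m =>
    if m % ℓ = ℓ - 1 then aa (n+1) m
    else if m % ℓ = ℓ - 2 then (if m = 0 then 0 else bb ℓ n (m-1))
    else (if m = 0 then 0 else bb ℓ n (m-1)) + bb ℓ n (m+1)

/-- `bSum ℓ n = Σ_{m=0}^n bb ℓ n m`. -/
def bSum (ℓ : ℕ) (n : ℕ) : ℕ := ∑ m ∈ Finset.range (n+1), bb ℓ n m

/-- `cc ℓ n r = Σ_{m ≥ 0, m ≡ r (mod ℓ)} aa n m` (finite since `aa n m = 0` for `m > n`). -/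
def cc (ℓ : ℕ) (n r : ℕ) : ℕ :=
  ∑ m ∈ Finset.range (n+1), if m % ℓ = r then aa n m else 0

/-- `ww ℓ n = Σ_{0 ≤ m ≤ n, m ≡ ℓ-1 (mod ℓ)} bb ℓ n m`. -/
def ww (ℓ : ℕ) (n : ℕ) : ℕ :=
  ∑ m ∈ Finset.range (n+1), if m % ℓ = ℓ - 1 then bb ℓ n m else 0

/- Write `n = m + 2k`. The recursion `a(n+1, m+1) = a(n, m+2) + a(n, m)` matches Pascal's rule
for `ballot n k = C(n, k) - C(n, k-1)`, and the boundary condition at `m = 0`, where the step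
down is missing, matches `ballot (2j+1) (j+1) = 0`: the middle two entries of an odd row of
Pascal's triangle coincide. -/

def ballot (n k : ℕ) : ℤ := n.choose k - if k = 0 then 0 else (n.choose (k - 1) : ℤ)

@[simp]
lemma ballot_zero_right (n : ℕ) : ballot n 0 = 1 := by
  simp [ballot]

lemma ballot_succ_succ (n k : ℕ) : ballot (n + 1) (k + 1) = ballot n (k + 1) + ballot n k := by
  cases k with
  | zero => simp [ballot]
  | succ k =>
    simp only [ballot, Nat.choose_succ_succ, Nat.succ_eq_add_one, Nat.add_sub_cancel,
      Nat.succ_ne_zero, if_false, Nat.cast_add]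
    ring

lemma ballot_two_mul_add_one_succ (j : ℕ) : ballot (2 * j + 1) (j + 1) = 0 := by
  have hsymm : (2 * j + 1).choose (j + 1) = (2 * j + 1).choose j := by
    simpa [show 2 * j + 1 - j = j + 1 by omega] using
      Nat.choose_symm (n := 2 * j + 1) (k := j) (by omega)
  simp [ballot, hsymm]

lemma aa_succ_zero (n : ℕ) : aa (n + 1) 0 = aa n 1 := by
  simp [aa]

lemma aa_succ_succ (n m : ℕ) : aa (n + 1) (m + 1) = aa n (m + 2) + aa n m := by
  simp [aa]

lemma aa_eq_zero_of_lt {n m : ℕ} (h : n < m) : aa n m = 0 := by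
  induction n generalizing m with
  | zero => simp [aa, h.ne']
  | succ n ih =>
    obtain ⟨m, rfl⟩ := Nat.exists_eq_add_one.mpr (by omega : 0 < m)
    rw [aa_succ_succ, ih (by omega), ih (by omega)]

lemma aa_eq_zero_of_mod_two_ne {n m : ℕ} (h : m % 2 ≠ n % 2) : aa n m = 0 := by
  induction n generalizing m with
  | zero => simp [aa, show m ≠ 0 by rintro rfl; simp at h]
  | succ n ih =>
    cases m with
    | zero => rw [aa_succ_zero, ih (by omega)]
    | succ m => rw [aa_succ_succ, ih (by omega), ih (by omega)]

lemma aa_add_two_mul (m k : ℕ) : (aa (m + 2 * k) m : ℤ) = ballot (m + 2 * k) k := by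
  induction hn : m + 2 * k generalizing m k with
  | zero =>
    obtain ⟨rfl, rfl⟩ : m = 0 ∧ k = 0 := by omega
    simp [aa]
  | succ n ih =>
    rcases m with _ | m <;> rcases k with _ | k
    · omega
    · obtain ⟨j, rfl⟩ : ∃ j, n = 2 * j + 1 := ⟨k, by omega⟩
      rw [aa_succ_zero, ih 1 j (by omega), show k = j by omega, ballot_succ_succ,
        ballot_two_mul_add_one_succ, zero_add]
    · obtain rfl : m = n := by omega
      rw [aa_succ_succ, aa_eq_zero_of_lt (by omega), zero_add, ih m 0 (by omega)]
      simp
    · rw [aa_succ_succ, ballot_succ_succ, Nat.cast_add, ih (m + 2) k (by omega),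
        ih m (k + 1) (by omega), add_comm]

/-- Ballot-type formula: `a(n,m) = 0` when `m > n` or `m ≢ n (mod 2)`; and for
`m ≤ n` with `m ≡ n (mod 2)`, `a(n,m) = C(n,(n−m)/2) − C(n,(n−m)/2−1)` where
`C(n,−1) := 0`. -/
theorem stmt10 : ∀ n m : ℕ,
    ((n < m ∨ m % 2 ≠ n % 2) → aa n m = 0) ∧
    (m ≤ n → m % 2 = n % 2 →
      (aa n m : ℤ) = (n.choose ((n - m) / 2) : ℤ) -
        (if (n - m) / 2 = 0 then 0 else (n.choose ((n - m) / 2 - 1) : ℤ))) := by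
  intro n m
  refine ⟨fun h => h.elim aa_eq_zero_of_lt aa_eq_zero_of_mod_two_ne, fun hle hpar => ?_⟩
  obtain ⟨k, rfl⟩ : ∃ k, n = m + 2 * k := ⟨(n - m) / 2, by omega⟩
  rw [show (m + 2 * k - m) / 2 = k by omega]
  exact aa_add_two_mul m k
end

section
/- For all real x with 0 < x < 1/2 and all real y with 0 < y < 1 such that 1 − x(y + y^{−1}) ≠ 0, the double series Σ_{n≥0} Σ_{m≥0} a(n,m)·x^n·y^m converges absolutely and equals (1 − (1 − √(1 − 4x²))/(2xy)) / (1 − x(y + y^{−1})). -/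
open Filter Real

lemma aa_eq_zero : ∀ n m, n < m → aa n m = 0 := by
  intro n
  induction n with
  | zero => intro m hm; simp [aa]; omega
  | succ n ih =>
    intro m hm
    rcases Nat.eq_zero_or_pos m with h0 | h0
    · omega
    · simp only [aa]
      rw [ih (m+1) (by omega), if_neg (by omega), ih (m-1) (by omega)]

lemma aa_le : ∀ n m, aa n m ≤ 2 ^ n := by
  intro n
  induction n with
  | zero => intro m; simp [aa]; split <;> simp
  | succ n ih =>
    intro m
    simp only [aa, pow_succ]
    have h1 := ih (m+1)
    have h2 : (if m = 0 then 0 else aa n (m-1)) ≤ 2 ^ n := by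
      split
      · positivity
      · exact ih (m-1)
    omega

noncomputable def Pf (n : ℕ) (y : ℝ) : ℝ := ∑ m ∈ Finset.range (n+1), (aa n m : ℝ) * y ^ m

lemma Pf_succ (n : ℕ) (y : ℝ) : y * Pf (n+1) y = (y^2 + 1) * Pf n y - aa n 0 := by
  have hA : ∑ m ∈ Finset.range (n+2), (aa n (m+1) : ℝ) * y ^ (m+1)
      = Pf n y - aa n 0 := by
    have := Finset.sum_range_succ' (fun m => (aa n m : ℝ) * y ^ m) (n+2)
    have hbig : ∑ m ∈ Finset.range (n+3), (aa n m : ℝ) * y ^ m = Pf n y := by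
      rw [Finset.sum_range_succ, Finset.sum_range_succ, aa_eq_zero n (n+1) (by omega),
        aa_eq_zero n (n+2) (by omega)]
      simp [Pf]
    rw [hbig] at this
    simp only [pow_zero, mul_one] at this
    linarith
  have hB : ∑ m ∈ Finset.range (n+2), (if m = 0 then (0:ℝ) else (aa n (m-1) : ℝ)) * y ^ m
      = y * Pf n y := by
    rw [Finset.sum_range_succ' (fun m => (if m = 0 then (0:ℝ) else (aa n (m-1) : ℝ)) * y ^ m) (n+1)]
    have hk : ∀ k : ℕ, (if k + 1 = 0 then (0:ℝ) else (aa n (k+1-1) : ℝ)) * y ^ (k+1)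
        = y * ((aa n k : ℝ) * y ^ k) := by
      intro k; rw [if_neg k.succ_ne_zero]; simp only [Nat.add_sub_cancel]; ring
    simp only [hk, if_pos rfl, zero_mul, add_zero]
    simp [Pf, Finset.mul_sum]
  have hsplit : Pf (n+1) y
      = ∑ m ∈ Finset.range (n+2), (aa n (m+1) : ℝ) * y ^ m
        + ∑ m ∈ Finset.range (n+2), (if m = 0 then (0:ℝ) else (aa n (m-1) : ℝ)) * y ^ m := by
    simp only [Pf]; rw [← Finset.sum_add_distrib]
    refine Finset.sum_congr rfl fun m hm => ?_
    simp only [aa]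
    push_cast
    split <;> ring
  have : y * Pf (n+1) y = y * ∑ m ∈ Finset.range (n+2), (aa n (m+1) : ℝ) * y ^ m
      + y * (y * Pf n y) := by rw [hsplit, hB]; ring
  rw [this]
  have : y * ∑ m ∈ Finset.range (n+2), (aa n (m+1) : ℝ) * y ^ m
      = ∑ m ∈ Finset.range (n+2), (aa n (m+1) : ℝ) * y ^ (m+1) := by
    rw [Finset.mul_sum]; refine Finset.sum_congr rfl fun m _ => by ring
  rw [this, hA]; ring

lemma summable_main (x y : ℝ) (hx0 : 0 < x) (hx : x < 1/2) (hy0 : 0 < y) (hy : y < 1) :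
    Summable (fun p : ℕ × ℕ => (aa p.1 p.2 : ℝ) * x ^ p.1 * y ^ p.2) := by
  have h2x : Summable (fun n : ℕ => (2*x) ^ n) :=
    summable_geometric_of_lt_one (by positivity) (by linarith)
  have hys : Summable (fun m : ℕ => y ^ m) :=
    summable_geometric_of_lt_one (by positivity) hy
  have hgeo : Summable (fun p : ℕ × ℕ => (2*x) ^ p.1 * y ^ p.2) :=
    Summable.mul_of_nonneg h2x hys (fun n => by positivity) (fun m => by positivity)
  refine hgeo.of_nonneg_of_le (fun p => by positivity) fun p => ?_
  have h1 : (aa p.1 p.2 : ℝ) ≤ 2 ^ p.1 := by exact_mod_cast aa_le p.1 p.2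
  have : (2*x) ^ p.1 * y ^ p.2 = 2 ^ p.1 * x ^ p.1 * y ^ p.2 := by rw [mul_pow]
  rw [this]
  gcongr

lemma summable_S0 (x : ℝ) (hx0 : 0 < x) (hx : x < 1/2) :
    Summable (fun n : ℕ => (aa n 0 : ℝ) * x ^ n) := by
  have h2x : Summable (fun n : ℕ => (2*x) ^ n) :=
    summable_geometric_of_lt_one (by positivity) (by linarith)
  refine h2x.of_nonneg_of_le (fun n => by positivity) fun n => ?_
  have h1 : (aa n 0 : ℝ) ≤ 2 ^ n := by exact_mod_cast aa_le n 0
  rw [mul_pow]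
  gcongr

lemma funeq (x y : ℝ) (hx0 : 0 < x) (hx : x < 1/2) (hy0 : 0 < y) (hy : y < 1) :
    (y - x * (y^2 + 1)) * (∑' p : ℕ × ℕ, (aa p.1 p.2 : ℝ) * x ^ p.1 * y ^ p.2)
      = y - x * ∑' n : ℕ, (aa n 0 : ℝ) * x ^ n := by
  have hF := summable_main x y hx0 hx hy0 hy
  set S := ∑' p : ℕ × ℕ, (aa p.1 p.2 : ℝ) * x ^ p.1 * y ^ p.2 with hSdef
  have hrow : ∀ n : ℕ, HasSum (fun m => (aa n m : ℝ) * x ^ n * y ^ m) (x ^ n * Pf n y) := by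
    intro n
    have h0 : ∀ m ∉ Finset.range (n+1), (aa n m : ℝ) * x ^ n * y ^ m = 0 := by
      intro m hm
      simp only [Finset.mem_range] at hm
      rw [aa_eq_zero n m (by omega)]
      simp
    have h : HasSum (fun m => (aa n m : ℝ) * x ^ n * y ^ m) (∑ m ∈ Finset.range (n+1), (aa n m : ℝ) * x ^ n * y ^ m) := hasSum_sum_of_ne_finset_zero h0
    have heq : ∑ m ∈ Finset.range (n+1), (aa n m : ℝ) * x ^ n * y ^ m = x ^ n * Pf n y := by
      simp only [Pf, Finset.mul_sum]
      exact Finset.sum_congr rfl fun m _ => by ring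
    rwa [heq] at h
  have hg : HasSum (fun n : ℕ => x ^ n * Pf n y) S := hF.hasSum.prod_fiberwise hrow
  have hsg := hg.summable
  have hS : ∑' n : ℕ, x ^ n * Pf n y = S := hg.tsum_eq
  have hS0 := summable_S0 x hx0 hx
  have hg0 : x ^ 0 * Pf 0 y = 1 := by simp [Pf, aa]
  have htail : ∑' n : ℕ, x ^ (n+1) * Pf (n+1) y = S - 1 := by
    have h := Summable.tsum_eq_zero_add hsg
    rw [hS, hg0] at h
    linarith
  have hterm : ∀ n : ℕ, y * (x ^ (n+1) * Pf (n+1) y)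
      = x * (y^2 + 1) * (x ^ n * Pf n y) - x * ((aa n 0 : ℝ) * x ^ n) := by
    intro n
    have h := Pf_succ n y
    have hp : x ^ (n+1) = x ^ n * x := pow_succ x n
    rw [hp]
    linear_combination (x ^ n * x) * h
  have hy_tail : y * (S - 1) = x * (y^2 + 1) * S - x * ∑' n : ℕ, (aa n 0 : ℝ) * x ^ n := by
    calc y * (S - 1) = y * ∑' n : ℕ, x ^ (n+1) * Pf (n+1) y := by rw [htail]
      _ = ∑' n : ℕ, y * (x ^ (n+1) * Pf (n+1) y) := tsum_mul_left.symm
      _ = ∑' n : ℕ, (x * (y^2 + 1) * (x ^ n * Pf n y) - x * ((aa n 0 : ℝ) * x ^ n)) := by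
          simp only [hterm]
      _ = (∑' n : ℕ, x * (y^2 + 1) * (x ^ n * Pf n y)) - ∑' n : ℕ, x * ((aa n 0 : ℝ) * x ^ n) := by
          exact Summable.tsum_sub (hsg.mul_left _) (hS0.mul_left x)
      _ = x * (y^2 + 1) * S - x * ∑' n : ℕ, (aa n 0 : ℝ) * x ^ n := by
          rw [tsum_mul_left, tsum_mul_left, hS]
  linear_combination hy_tail

/-- The bivariate generating function of `a(n,m)`: for `0 < x < 1/2`, `0 < y < 1` with
`1 − x(y + y⁻¹) ≠ 0`, the double series converges absolutely and equals
`(1 − (1 − √(1−4x²))/(2xy)) / (1 − x(y + y⁻¹))`. -/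
theorem stmt11 (x y : ℝ) (hx0 : 0 < x) (hx : x < 1/2) (hy0 : 0 < y) (hy : y < 1)
    (hker : 1 - x * (y + y⁻¹) ≠ 0) :
    Summable (fun p : ℕ × ℕ => (aa p.1 p.2 : ℝ) * x ^ p.1 * y ^ p.2) ∧
    ∑' p : ℕ × ℕ, (aa p.1 p.2 : ℝ) * x ^ p.1 * y ^ p.2 =
      (1 - (1 - Real.sqrt (1 - 4 * x ^ 2)) / (2 * x * y)) / (1 - x * (y + y⁻¹)) := by
  refine ⟨summable_main x y hx0 hx hy0 hy, ?_⟩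
  set s := Real.sqrt (1 - 4 * x ^ 2) with hsdef
  have hD : (0:ℝ) ≤ 1 - 4 * x ^ 2 := by nlinarith
  have hs2 : s ^ 2 = 1 - 4 * x ^ 2 := Real.sq_sqrt hD
  have hs0 : 0 ≤ s := Real.sqrt_nonneg _
  have hs1 : s < 1 := by nlinarith
  set y₀ : ℝ := (1 - s) / (2 * x) with hy0def
  have hy00 : 0 < y₀ := by
    apply div_pos (by linarith) (by linarith)
  have hy01 : y₀ < 1 := by
    rw [div_lt_one (by linarith)]
    nlinarith
  have hker0 : y₀ - x * (y₀ ^ 2 + 1) = 0 := by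
    rw [hy0def]
    field_simp
    nlinarith [hs2]
  -- plug in y₀ : get x * S0 = y₀
  have h1 := funeq x y₀ hx0 hx hy00 hy01
  rw [hker0, zero_mul] at h1
  have hxS0 : x * ∑' n : ℕ, (aa n 0 : ℝ) * x ^ n = y₀ := by linarith
  -- general y
  have h2 := funeq x y hx0 hx hy0 hy
  rw [hxS0] at h2
  have hy' : y ≠ 0 := ne_of_gt hy0
  have hkden : y - x * (y ^ 2 + 1) ≠ 0 := by
    have hinv : y * y⁻¹ = 1 := mul_inv_cancel₀ hy'
    have : y - x * (y ^ 2 + 1) = y * (1 - x * (y + y⁻¹)) := by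
      linear_combination x * hinv
    rw [this]
    exact mul_ne_zero hy' hker
  have hSval : ∑' p : ℕ × ℕ, (aa p.1 p.2 : ℝ) * x ^ p.1 * y ^ p.2
      = (y - y₀) / (y - x * (y ^ 2 + 1)) := by
    rw [eq_div_iff hkden]
    linear_combination h2
  rw [hSval, hy0def]
  rw [div_eq_div_iff hkden hker]
  field_simp
end
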